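/- (Theorem 1) Let N ≥ 2 and let T be a tree on vertex set Fin N. Then there exist angles θ_v (namely all equal to π/2) such that the one-round iHVA-tree state ψ obtained by applying the gates e^{−iθ_v Z_{parent(v)}Y_v/2} (in any hierarchy-respecting order) to |+⟩^{⊗N} satisfies ⟨ψ| Ĉ |ψ⟩ = N−1, and N−1 equals the maximum cut size max_x C(x) of T; i.e. the one-round iHVA-tree achieves the MaxCut of an arbitrary tree exactly. -/

import Mathlib

open Matrix

noncomputable section

/-- An `N`-qubit state: a vector in `ℂ^({0,1}^N)` indexed by bit strings. -/
abbrev QState (N : ℕ) := (Fin N → Fin 2) → ℂ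

/-- An `N`-qubit operator: a `2^N × 2^N` complex matrix indexed by bit strings. -/
abbrev QOp (N : ℕ) := Matrix (Fin N → Fin 2) (Fin N → Fin 2) ℂ

def PauliX : Matrix (Fin 2) (Fin 2) ℂ := !![0, 1; 1, 0]
def PauliY : Matrix (Fin 2) (Fin 2) ℂ := !![0, -Complex.I; Complex.I, 0]
def PauliZ : Matrix (Fin 2) (Fin 2) ℂ := !![1, 0; 0, -1]

/-- The Kronecker (tensor) product `⊗ₖ P k` of one `2 × 2` matrix per qubit. -/
def pauliString {N : ℕ} (P : Fin N → Matrix (Fin 2) (Fin 2) ℂ) : QOp N :=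
  fun x y => ∏ k, P k (x k) (y k)

/-- The operator acting as `A` on qubit `i`, `B` on qubit `j` and identity elsewhere. -/
def twoQubitOp {N : ℕ} (A B : Matrix (Fin 2) (Fin 2) ℂ) (i j : Fin N) : QOp N :=
  pauliString (fun k => if k = i then A else if k = j then B else 1)

/-- Computational basis vector `|x⟩`. -/
def ket {N : ℕ} (x : Fin N → Fin 2) : QState N := fun y => if y = x then 1 else 0

/-- `|+⟩^{⊗N}`, the uniform vector with all coordinates `2^{-N/2}`. -/
def plusN (N : ℕ) : QState N := fun _ => (((Real.sqrt 2)⁻¹ : ℝ) : ℂ) ^ N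

/-- Expectation value `⟨ψ| A |ψ⟩`. -/
def expval {N : ℕ} (ψ : QState N) (A : QOp N) : ℂ :=
  ∑ x, (starRingEnd ℂ) (ψ x) * (A *ᵥ ψ) x

/-- The set of edges of `G`, each listed once as an ordered pair `(i,j)` with `i < j`. -/
def edgePairs {N : ℕ} (G : SimpleGraph (Fin N)) [DecidableRel G.Adj] :
    Finset (Fin N × Fin N) :=
  Finset.univ.filter (fun p : Fin N × Fin N => p.1 < p.2 ∧ G.Adj p.1 p.2)

/-- The cut size `C(x)`: the number of edges `(i,j)` of `G` with `x i ≠ x j`. -/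
def cutSize {N : ℕ} (G : SimpleGraph (Fin N)) [DecidableRel G.Adj] (x : Fin N → Fin 2) : ℕ :=
  ((edgePairs G).filter (fun p => x p.1 ≠ x p.2)).card

/-- The MaxCut Hamiltonian `H_MC = ∑_{(i,j) ∈ E} Z_i Z_j`. -/
def HMC {N : ℕ} (G : SimpleGraph (Fin N)) [DecidableRel G.Adj] : QOp N :=
  ∑ p ∈ edgePairs G, twoQubitOp PauliZ PauliZ p.1 p.2

/-- The cut-counting observable `Ĉ = (1/2) ∑_{(i,j) ∈ E} (1 - Z_i Z_j)`. -/
def Chat {N : ℕ} (G : SimpleGraph (Fin N)) [DecidableRel G.Adj] : QOp N :=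
  (1/2 : ℂ) • ∑ p ∈ edgePairs G, ((1 : QOp N) - twoQubitOp PauliZ PauliZ p.1 p.2)

/-- The gate `e^{-iθ Z_i Y_j / 2}`. -/
def gateZY {N : ℕ} (θ : ℝ) (i j : Fin N) : QOp N :=
  NormedSpace.exp ((-Complex.I * ((θ : ℂ) / 2)) • twoQubitOp PauliZ PauliY i j)

/-- The gate `e^{-iθ Y_i Z_j / 2}`. -/
def gateYZ {N : ℕ} (θ : ℝ) (i j : Fin N) : QOp N :=
  NormedSpace.exp ((-Complex.I * ((θ : ℂ) / 2)) • twoQubitOp PauliY PauliZ i j)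

end

/-!
At `θ = π/2` the gate `e^{-iπ Z_p Y_v / 4}` sends a state that does not depend on qubit `v` to the
same state multiplied by `√2` on the bit strings with `x_p ≠ x_v` and by `0` on the others. When
the gates are applied parents first, no earlier gate touches the target qubit of a later one, so
the final state is `2^{-N/2} √2^{N-1} = 1/√2` times the indicator of the bit strings cutting every
parent edge. In a tree the `N - 1` parent edges are all the edges, and the bit strings cutting all
of them are the two colourings by the parity of the distance to the root. Hence the state is the
uniform superposition of two cuts of size `N - 1`, which is the largest possible size.
-/

theorem NormedSpace.exp_smul_of_mul_self_eq_neg_one {A : Type*} [Ring A] [Algebra ℂ A]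
    [TopologicalSpace A] [IsTopologicalRing A] [ContinuousSMul ℂ A] [T2Space A]
    {J : A} (hJ : J * J = -1) (z : ℂ) :
    NormedSpace.exp (z • J) = Complex.cos z • (1 : A) + Complex.sin z • J := by
  have hJ_even (k : ℕ) : J ^ (2 * k) = ((-1 : ℂ) ^ k) • (1 : A) := by
    rw [pow_mul, sq, hJ, ← neg_one_smul ℂ (1 : A), smul_pow, one_pow]
  rw [NormedSpace.exp_eq_tsum ℂ]
  refine HasSum.tsum_eq (HasSum.even_add_odd ?_ ?_)
  · convert (Complex.hasSum_cos z).smul_const (1 : A) using 1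
    ext k
    rw [smul_pow, hJ_even, smul_smul, smul_smul]
    ring_nf
  · convert (Complex.hasSum_sin z).smul_const J using 1
    ext k
    rw [smul_pow, pow_succ J, hJ_even, smul_mul_assoc, one_mul, smul_smul, smul_smul]
    ring_nf

lemma PauliZ_mul_self : PauliZ * PauliZ = 1 := by
  rw [PauliZ, mul_fin_two, one_fin_two]; norm_num

lemma PauliY_mul_self : PauliY * PauliY = 1 := by
  rw [PauliY, mul_fin_two, one_fin_two]; norm_num

lemma PauliZ_apply (a b : Fin 2) : PauliZ a b = if b = a then ![1, -1] a else 0 := by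
  fin_cases a <;> fin_cases b <;> simp [PauliZ]

lemma PauliY_apply (a b : Fin 2) :
    PauliY a b = if b = a + 1 then ![-Complex.I, Complex.I] a else 0 := by
  fin_cases a <;> fin_cases b <;> simp [PauliY]

section PauliString

variable {N : ℕ}

lemma pauliString_mul (P Q : Fin N → Matrix (Fin 2) (Fin 2) ℂ) :
    pauliString P * pauliString Q = pauliString (fun k => P k * Q k) := by
  ext x y
  simp only [pauliString, mul_apply, Finset.prod_mul_distrib, Finset.prod_univ_sum,
    Fintype.piFinset_univ]

lemma pauliString_one : pauliString (fun _ => 1) = (1 : QOp N) := by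
  ext x y
  simp only [pauliString, one_apply, Finset.prod_ite_zero, Finset.prod_const_one,
    Finset.mem_univ, true_implies, funext_iff]

lemma twoQubitOp_mul_self {A B : Matrix (Fin 2) (Fin 2) ℂ} (hA : A * A = 1) (hB : B * B = 1)
    (i j : Fin N) : twoQubitOp A B i j * twoQubitOp A B i j = 1 := by
  rw [twoQubitOp, pauliString_mul, ← pauliString_one]
  congr 1 with k
  split_ifs <;> simp [*]

lemma pauliString_mulVec_of_monomial (P : Fin N → Matrix (Fin 2) (Fin 2) ℂ)
    (σ : Fin N → Fin 2 → Fin 2) (c : Fin N → Fin 2 → ℂ)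
    (hP : ∀ k a b, P k a b = if b = σ k a then c k a else 0) (ψ : QState N)
    (x : Fin N → Fin 2) :
    (pauliString P *ᵥ ψ) x = (∏ k, c k (x k)) * ψ (fun k => σ k (x k)) := by
  rw [mulVec, dotProduct, Finset.sum_eq_single (fun k => σ k (x k))]
  · simp only [pauliString, hP, if_true]
  · intro y _ hy
    obtain ⟨k, hk⟩ := Function.ne_iff.mp hy
    rw [pauliString, Finset.prod_eq_zero (Finset.mem_univ k) (by simp [hP, hk]), zero_mul]
  · simp

lemma twoQubitOp_mulVec_of_monomial {A B : Matrix (Fin 2) (Fin 2) ℂ} {σ τ : Fin 2 → Fin 2}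
    {c d : Fin 2 → ℂ} (hA : ∀ a b, A a b = if b = σ a then c a else 0)
    (hB : ∀ a b, B a b = if b = τ a then d a else 0) {i j : Fin N} (hij : i ≠ j)
    (ψ : QState N) (x : Fin N → Fin 2) :
    (twoQubitOp A B i j *ᵥ ψ) x
      = c (x i) * d (x j) * ψ (Function.update (Function.update x i (σ (x i))) j (τ (x j))) := by
  rw [twoQubitOp, pauliString_mulVec_of_monomial _
    (fun k => if k = i then σ else if k = j then τ else id)
    (fun k => if k = i then c else if k = j then d else 1)]
  · congr 1
    · rw [Finset.prod_eq_mul i j hij] <;> simp +contextual [hij.symm]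
    · congr 1 with k
      by_cases hkj : k = j
      · subst hkj; simp [hij.symm]
      by_cases hki : k = i
      · subst hki; simp [hkj]
      simp [hki, hkj]
  · intro k a b
    by_cases hki : k = i
    · simp only [hki, ite_true, hA]
    by_cases hkj : k = j
    · simp only [hkj, hij.symm, ite_true, ite_false, hB]
    simp only [hki, hkj, ite_false, one_apply, id]
    exact if_congr eq_comm rfl rfl

lemma twoQubitOp_PauliZ_PauliZ_mulVec {i j : Fin N} (hij : i ≠ j) (ψ : QState N)
    (x : Fin N → Fin 2) :
    (twoQubitOp PauliZ PauliZ i j *ᵥ ψ) x = ![1, -1] (x i) * ![1, -1] (x j) * ψ x := by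
  simp [twoQubitOp_mulVec_of_monomial PauliZ_apply PauliZ_apply hij]

lemma twoQubitOp_PauliZ_PauliY_mulVec {i j : Fin N} (hij : i ≠ j) (ψ : QState N)
    (x : Fin N → Fin 2) :
    (twoQubitOp PauliZ PauliY i j *ᵥ ψ) x
      = ![1, -1] (x i) * ![-Complex.I, Complex.I] (x j) * ψ (Function.update x j (x j + 1)) := by
  simp [twoQubitOp_mulVec_of_monomial PauliZ_apply PauliY_apply hij]

end PauliString

section Circuit

variable {N : ℕ}

lemma gateZY_eq (θ : ℝ) (i j : Fin N) :
    gateZY θ i j = Complex.cos (θ / 2) • (1 : QOp N)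
      + Complex.sin (θ / 2) • (-Complex.I • twoQubitOp PauliZ PauliY i j) := by
  have hJ : (-Complex.I • twoQubitOp PauliZ PauliY i j)
      * (-Complex.I • twoQubitOp PauliZ PauliY i j) = -1 := by
    rw [smul_mul_smul_comm, twoQubitOp_mul_self PauliZ_mul_self PauliY_mul_self, neg_mul_neg,
      Complex.I_mul_I, neg_one_smul]
  rw [gateZY, mul_comm, ← smul_smul, NormedSpace.exp_smul_of_mul_self_eq_neg_one hJ]

noncomputable def cutWeight (a b : Fin 2) : ℂ := if a = b then 0 else (Real.sqrt 2 : ℂ)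

lemma gateZY_pi_div_two_mulVec {i j : Fin N} (hij : i ≠ j) {ψ : QState N}
    {x : Fin N → Fin 2} (hψ : ψ (Function.update x j (x j + 1)) = ψ x) :
    (gateZY (Real.pi / 2) i j *ᵥ ψ) x = cutWeight (x i) (x j) * ψ x := by
  have hangle : ((Real.pi / 2 : ℝ) : ℂ) / 2 = ((Real.pi / 4 : ℝ) : ℂ) := by push_cast; ring
  rw [gateZY_eq, hangle, ← Complex.ofReal_cos, ← Complex.ofReal_sin, Real.cos_pi_div_four,
    Real.sin_pi_div_four, add_mulVec, smul_mulVec, smul_mulVec, smul_mulVec, one_mulVec]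
  simp only [Pi.add_apply, Pi.smul_apply, smul_eq_mul, twoQubitOp_PauliZ_PauliY_mulVec hij, hψ]
  generalize x i = a, x j = b
  fin_cases a <;> fin_cases b <;> simp [cutWeight, ← mul_assoc] <;> ring

lemma foldl_gateZY_pi_div_two_plusN (parent : Fin N → Fin N) {L : List (Fin N)}
    (hnodup : L.Nodup) (hne : ∀ v ∈ L, parent v ≠ v)
    (hpw : L.Pairwise fun u v => parent u ≠ v) :
    L.foldl (fun ψ v => gateZY (Real.pi / 2) (parent v) v *ᵥ ψ) (plusN N)
      = fun x => plusN N x * (L.map fun v => cutWeight (x (parent v)) (x v)).prod := by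
  induction L using List.reverseRecOn with
  | nil => simp
  | append_singleton A v ih =>
    obtain ⟨hnodupA, -, hvA⟩ := List.nodup_append'.mp hnodup
    obtain ⟨hpwA, -, hparentA⟩ := List.pairwise_append.mp hpw
    rw [List.foldl_append, List.foldl_cons, List.foldl_nil,
      ih hnodupA (fun u hu => hne u (List.mem_append_left _ hu)) hpwA]
    funext x
    have hflip : (A.map fun u => cutWeight (Function.update x v (x v + 1) (parent u))
        (Function.update x v (x v + 1) u)) = A.map fun u => cutWeight (x (parent u)) (x u) := by
      refine List.map_congr_left fun u hu => ?_
      rw [Function.update_of_ne (hparentA u hu v (List.mem_singleton_self v)),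
        Function.update_of_ne (fun h : u = v => hvA (h ▸ hu) (List.mem_singleton_self v))]
    rw [gateZY_pi_div_two_mulVec (hne v (by simp)) (by simp only [plusN, hflip]),
      List.map_append, List.prod_append, List.map_singleton, List.prod_singleton, plusN]
    ring

lemma plusN_mul_prod_cutWeight (parent : Fin N → Fin N) {L : List (Fin N)}
    (hlen : L.length + 1 = N) (x : Fin N → Fin 2) :
    plusN N x * (L.map fun v => cutWeight (x (parent v)) (x v)).prod
      = if ∀ v ∈ L, x (parent v) ≠ x v then (((Real.sqrt 2)⁻¹ : ℝ) : ℂ) else 0 := by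
  split_ifs with hcut
  · have hsqrt : (((Real.sqrt 2)⁻¹ : ℝ) : ℂ) * (Real.sqrt 2 : ℂ) = 1 := by
      rw [← Complex.ofReal_mul, inv_mul_cancel₀ (by positivity), Complex.ofReal_one]
    -- `rw [← hlen]` in the goal would also hit the `N` in the type of `L`.
    have hpow : (((Real.sqrt 2)⁻¹ : ℝ) : ℂ) ^ N
        = (((Real.sqrt 2)⁻¹ : ℝ) : ℂ) ^ (L.length + 1) := by
      rw [hlen]
    rw [List.prod_eq_pow_card _ (Real.sqrt 2 : ℂ), List.length_map, plusN, hpow, pow_succ',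
      mul_assoc, ← mul_pow, hsqrt, one_pow, mul_one]
    simp only [List.mem_map]
    rintro _ ⟨v, hv, rfl⟩
    exact if_neg (hcut v hv)
  · push Not at hcut
    obtain ⟨v, hv, heq⟩ := hcut
    exact mul_eq_zero_of_right _ (List.prod_eq_zero (List.mem_map.2 ⟨v, hv, if_pos heq⟩))

lemma Chat_mulVec (G : SimpleGraph (Fin N)) [DecidableRel G.Adj] (ψ : QState N)
    (x : Fin N → Fin 2) : (Chat G *ᵥ ψ) x = cutSize G x * ψ x := by
  have hedge : ∀ p ∈ edgePairs G, (((1 : QOp N) - twoQubitOp PauliZ PauliZ p.1 p.2) *ᵥ ψ) x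
      = (if x p.1 ≠ x p.2 then 2 else 0) * ψ x := by
    intro p hp
    rw [sub_mulVec, Pi.sub_apply, one_mulVec,
      twoQubitOp_PauliZ_PauliZ_mulVec (Finset.mem_filter.mp hp).2.1.ne]
    generalize x p.1 = a, x p.2 = b
    fin_cases a <;> fin_cases b <;> simp <;> ring
  rw [Chat, smul_mulVec, Pi.smul_apply, Matrix.sum_mulVec, Finset.sum_apply,
    Finset.sum_congr rfl hedge, ← Finset.sum_mul, ← Finset.sum_filter, Finset.sum_const,
    cutSize, nsmul_eq_mul, smul_eq_mul]
  ring

lemma expval_Chat (G : SimpleGraph (Fin N)) [DecidableRel G.Adj] (ψ : QState N) :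
    expval ψ (Chat G) = ∑ x, starRingEnd ℂ (ψ x) * ψ x * cutSize G x := by
  simp only [expval, Chat_mulVec]
  exact Finset.sum_congr rfl fun x _ => by ring

end Circuit

lemma List.pairwise_apply_ne_of_idxOf_lt {α : Type*} [DecidableEq α] {L : List α}
    (hnodup : L.Nodup) {f : α → α} (h : ∀ v ∈ L, f v ∈ L → L.idxOf (f v) < L.idxOf v) :
    L.Pairwise fun u v => f u ≠ v := by
  rw [List.pairwise_iff_getElem]
  intro i j hi hj hij hf
  have := h L[i] (List.getElem_mem _) (hf ▸ List.getElem_mem _)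
  rw [hf, hnodup.idxOf_getElem, hnodup.idxOf_getElem] at this
  omega

section Tree

open Fin.NatCast

variable {N : ℕ}

lemma card_edgePairs (G : SimpleGraph (Fin N)) [DecidableRel G.Adj] :
    (edgePairs G).card = G.edgeFinset.card := by
  refine Finset.card_bij (fun p _ => s(p.1, p.2)) (fun p hp => ?_) (fun p hp q hq he => ?_) ?_
  · exact G.mem_edgeFinset.mpr (Finset.mem_filter.mp hp).2.2
  · have hp' := (Finset.mem_filter.mp hp).2.1
    have hq' := (Finset.mem_filter.mp hq).2.1
    rcases Sym2.eq_iff.mp he with ⟨h1, h2⟩ | ⟨h1, h2⟩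
    · exact Prod.ext h1 h2
    · exact absurd (h1 ▸ h2 ▸ hp') hq'.asymm
  · refine Sym2.ind fun a b he => ?_
    have hadj : G.Adj a b := G.mem_edgeFinset.mp he
    rcases hadj.ne.lt_or_gt with h | h
    · exact ⟨(a, b), Finset.mem_filter.mpr ⟨Finset.mem_univ _, h, hadj⟩, rfl⟩
    · exact ⟨(b, a), Finset.mem_filter.mpr ⟨Finset.mem_univ _, h, hadj.symm⟩, Sym2.eq_swap⟩

lemma card_edgePairs_of_isTree {T : SimpleGraph (Fin N)} [DecidableRel T.Adj] (hT : T.IsTree) :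
    (edgePairs T).card = N - 1 := by
  have := hT.card_edgeFinset
  rw [Fintype.card_fin] at this
  rw [card_edgePairs]
  omega

lemma cutSize_le_of_isTree {T : SimpleGraph (Fin N)} [DecidableRel T.Adj] (hT : T.IsTree)
    (x : Fin N → Fin 2) : cutSize T x ≤ N - 1 :=
  (Finset.card_filter_le _ _).trans_eq (card_edgePairs_of_isTree hT)

def IsParentMap (T : SimpleGraph (Fin N)) (r : Fin N) (parent : Fin N → Fin N) : Prop :=
  ∀ v, v ≠ r → T.Adj (parent v) v ∧ T.dist r (parent v) + 1 = T.dist r v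

noncomputable def treeColoring (T : SimpleGraph (Fin N)) (r : Fin N) (b : Fin 2) (v : Fin N) :
    Fin 2 :=
  b + (T.dist r v : Fin 2)

variable {T : SimpleGraph (Fin N)} {r : Fin N} {parent : Fin N → Fin N}

lemma image_parentEdge_eq_edgeFinset [DecidableRel T.Adj] (hT : T.IsTree)
    (hparent : IsParentMap T r parent) :
    (Finset.univ.erase r).image (fun v => s(parent v, v)) = T.edgeFinset := by
  refine Finset.eq_of_subset_of_card_le (fun e he => ?_) ?_
  · obtain ⟨v, hv, rfl⟩ := Finset.mem_image.mp he
    exact T.mem_edgeFinset.mpr (hparent v (Finset.ne_of_mem_erase hv)).1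
  · rw [← card_edgePairs, card_edgePairs_of_isTree hT, Finset.card_image_of_injOn,
      Finset.card_erase_of_mem (Finset.mem_univ r), Finset.card_univ, Fintype.card_fin]
    intro u hu v hv he
    have du := (hparent u (Finset.ne_of_mem_erase hu)).2
    have dv := (hparent v (Finset.ne_of_mem_erase hv)).2
    rcases Sym2.eq_iff.mp he with ⟨-, h⟩ | ⟨h₁, h₂⟩
    · exact h
    · rw [h₁] at du
      rw [← h₂] at dv
      omega

lemma cutSize_eq_of_forall_parent_ne [DecidableRel T.Adj] (hT : T.IsTree)
    (hparent : IsParentMap T r parent) {x : Fin N → Fin 2}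
    (hx : ∀ v, v ≠ r → x (parent v) ≠ x v) : cutSize T x = N - 1 := by
  rw [cutSize, Finset.filter_true_of_mem, card_edgePairs_of_isTree hT]
  intro p hp
  have he : s(p.1, p.2) ∈ T.edgeFinset :=
    T.mem_edgeFinset.mpr (Finset.mem_filter.mp hp).2.2
  rw [← image_parentEdge_eq_edgeFinset hT hparent] at he
  obtain ⟨v, hv, he⟩ := Finset.mem_image.mp he
  rcases Sym2.eq_iff.mp he with ⟨h₁, h₂⟩ | ⟨h₁, h₂⟩
  · exact h₁ ▸ h₂ ▸ hx v (Finset.ne_of_mem_erase hv)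
  · exact h₁ ▸ h₂ ▸ (hx v (Finset.ne_of_mem_erase hv)).symm

lemma treeColoring_parent_ne (hparent : IsParentMap T r parent) (b : Fin 2) {v : Fin N}
    (hv : v ≠ r) :
    treeColoring T r b (parent v) ≠ treeColoring T r b v := by
  rw [treeColoring, treeColoring, ← (hparent v hv).2]
  push_cast
  generalize (T.dist r (parent v) : Fin 2) = a
  fin_cases a <;> fin_cases b <;> decide

lemma eq_treeColoring_of_forall_parent_ne (hparent : IsParentMap T r parent)
    {x : Fin N → Fin 2} (hx : ∀ v, v ≠ r → x (parent v) ≠ x v) : x = treeColoring T r (x r) := by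
  suffices ∀ n v, T.dist r v = n → x v = treeColoring T r (x r) v from
    funext fun v => this _ v rfl
  intro n
  induction n with
  | zero =>
    intro v hv
    -- `T.dist r v = 0` also when `v` is unreachable, so `v = r` has to come from `hparent`.
    obtain rfl : v = r := by
      by_contra hvr
      have := (hparent v hvr).2
      omega
    simp [treeColoring]
  | succ n ih =>
    intro v hv
    have hvr : v ≠ r := by rintro rfl; simp at hv
    have hpv := ih (parent v) (by have := (hparent v hvr).2; omega)
    have hxv := hx v hvr
    have hcv := treeColoring_parent_ne hparent (x r) hvr
    rw [hpv] at hxv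
    omega

lemma treeColoring_zero_ne_one : treeColoring T r 0 ≠ treeColoring T r 1 := by
  intro h
  simpa [treeColoring] using congrFun h r

lemma filter_forall_parent_ne_eq (hparent : IsParentMap T r parent) :
    Finset.univ.filter (fun x : Fin N → Fin 2 => ∀ v, v ≠ r → x (parent v) ≠ x v)
      = {treeColoring T r 0, treeColoring T r 1} := by
  ext x
  simp only [Finset.mem_filter, Finset.mem_univ, true_and, Finset.mem_insert,
    Finset.mem_singleton]
  constructor
  · intro hx
    rw [eq_treeColoring_of_forall_parent_ne hparent hx]
    generalize x r = b
    fin_cases b <;> simp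
  · rintro (rfl | rfl) v hv <;> exact treeColoring_parent_ne hparent _ hv

lemma sup_cutSize_eq_of_isTree [DecidableRel T.Adj] (hT : T.IsTree)
    (hparent : IsParentMap T r parent) : Finset.univ.sup (cutSize T) = N - 1 :=
  le_antisymm (Finset.sup_le fun x _ => cutSize_le_of_isTree hT x)
    ((cutSize_eq_of_forall_parent_ne hT hparent
      fun _ hv => treeColoring_parent_ne hparent 0 hv).symm.le.trans
      (Finset.le_sup (Finset.mem_univ _)))

lemma expval_Chat_of_isTree [DecidableRel T.Adj] (hT : T.IsTree)
    (hparent : IsParentMap T r parent) :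
    expval (fun x => if ∀ v, v ≠ r → x (parent v) ≠ x v then (((Real.sqrt 2)⁻¹ : ℝ) : ℂ)
      else 0) (Chat T) = N - 1 := by
  have hsq : starRingEnd ℂ (((Real.sqrt 2)⁻¹ : ℝ) : ℂ) * (((Real.sqrt 2)⁻¹ : ℝ) : ℂ)
      = 1 / 2 := by
    rw [Complex.conj_ofReal, ← Complex.ofReal_mul, ← mul_inv, Real.mul_self_sqrt two_pos.le]
    norm_num
  have hcard : (N - 1 : ℕ) = (N : ℂ) - 1 := by rw [Nat.cast_sub (Fin.pos r), Nat.cast_one]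
  rw [expval_Chat, ← hcard]
  trans ∑ x ∈ Finset.univ.filter (fun x : Fin N → Fin 2 => ∀ v, v ≠ r → x (parent v) ≠ x v),
    1 / 2 * ((N - 1 : ℕ) : ℂ)
  · rw [Finset.sum_filter]
    refine Finset.sum_congr rfl fun x _ => ?_
    split_ifs with hx
    · rw [hsq, cutSize_eq_of_forall_parent_ne hT hparent hx]
    · simp
  · rw [filter_forall_parent_ne_eq hparent, Finset.sum_pair treeColoring_zero_ne_one]
    ring

end Tree

theorem iHVA_tree_solves_maxcut_of_tree_general {N : ℕ}
    (T : SimpleGraph (Fin N)) [DecidableRel T.Adj] (hT : T.IsTree) (r : Fin N)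
    (parent : Fin N → Fin N)
    (hparent : ∀ v, v ≠ r → T.Adj (parent v) v ∧ T.dist r (parent v) + 1 = T.dist r v)
    (L : List (Fin N)) (hnodup : L.Nodup) (hmem : ∀ v, v ∈ L ↔ v ≠ r)
    (horder : ∀ v ∈ L, parent v ≠ r → L.idxOf (parent v) < L.idxOf v) :
    ∃ θ : Fin N → ℝ, (∀ v, θ v = Real.pi / 2) ∧
      expval (L.foldl (fun ψ v => gateZY (θ v) (parent v) v *ᵥ ψ) (plusN N)) (Chat T)
        = (N : ℂ) - 1 ∧
      Finset.univ.sup (cutSize T) = N - 1 := by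
  have hne : ∀ v ∈ L, parent v ≠ v := fun v hv => (hparent v ((hmem v).1 hv)).1.ne
  have hpw : L.Pairwise fun u v => parent u ≠ v :=
    List.pairwise_apply_ne_of_idxOf_lt hnodup fun v hv hpv => horder v hv ((hmem _).1 hpv)
  have hlen : L.length + 1 = N := by
    have hset : L.toFinset = Finset.univ.erase r := by ext v; simp [hmem]
    rw [← List.toFinset_card_of_nodup hnodup, hset, Finset.card_erase_add_one (Finset.mem_univ r),
      Finset.card_univ, Fintype.card_fin]
  have hcut (x : Fin N → Fin 2) :
      (∀ v ∈ L, x (parent v) ≠ x v) ↔ ∀ v, v ≠ r → x (parent v) ≠ x v := by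
    simp only [hmem]
  refine ⟨fun _ => Real.pi / 2, fun _ => rfl, ?_, sup_cutSize_eq_of_isTree hT hparent⟩
  rw [foldl_gateZY_pi_div_two_plusN parent hnodup hne hpw]
  simp only [plusN_mul_prod_cutWeight parent hlen, hcut]
  exact expval_Chat_of_isTree hT hparent

/-- **Theorem 1.** The MaxCut of an arbitrary tree on `Fin N` (`N ≥ 2`) is
achieved exactly by the one-round iHVA-tree: there exist angles (namely all `π/2`) such that
the resulting state `ψ` satisfies `⟨ψ| Ĉ |ψ⟩ = N − 1`, and `N − 1` is the maximum cut size. -/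
theorem iHVA_tree_solves_maxcut_of_tree {N : ℕ} (hN : 2 ≤ N)
    (T : SimpleGraph (Fin N)) [DecidableRel T.Adj] (hT : T.IsTree) (r : Fin N)
    (parent : Fin N → Fin N)
    (hparent : ∀ v, v ≠ r → T.Adj (parent v) v ∧ T.dist r (parent v) + 1 = T.dist r v)
    (L : List (Fin N)) (hnodup : L.Nodup) (hmem : ∀ v, v ∈ L ↔ v ≠ r)
    (horder : ∀ v ∈ L, parent v ≠ r → L.idxOf (parent v) < L.idxOf v) :
    ∃ θ : Fin N → ℝ, (∀ v, θ v = Real.pi / 2) ∧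
      expval (L.foldl (fun ψ v => gateZY (θ v) (parent v) v *ᵥ ψ) (plusN N)) (Chat T)
        = (N : ℂ) - 1 ∧
      Finset.univ.sup (cutSize T) = N - 1 :=
  iHVA_tree_solves_maxcut_of_tree_general T hT r parent hparent L hnodup hmem horder
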